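/- Sandwiched-projector lower bound: Let ρ be a positive semidefinite complex square matrix with Tr[ρ] ≤ 1, and let Π, Π̄ be matrices over the same index type with 0 ≤ Π ≤ I and 0 ≤ Π̄ ≤ I. Then Tr[Π̄ Π Π̄ ρ] ≥ Tr[Π ρ] − ‖Π̄ ρ Π̄ − ρ‖₁. -/

import Mathlib

open scoped Matrix ComplexOrder

/-!
With `A = Pb ρ Pb - ρ`, cyclicity of the trace gives `Tr[Pb P Pb ρ] = Tr[P ρ] + Tr[P A]`, and `A`
is Hermitian. Since `|A| + A = 2 A⁺ ≥ 0` and `0 ≤ P ≤ 1`, we get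
`Tr[P A] ≥ -Tr[P |A|] ≥ -Tr |A| = -‖A‖₁`.
-/

open scoped MatrixOrder Matrix.Norms.L2Operator in
/-- The trace norm `‖A‖₁ = Tr[√(AᴴA)]` of a complex square matrix. -/
noncomputable def traceNorm {d : Type*} [Fintype d] [DecidableEq d]
    (A : Matrix d d ℂ) : ℝ :=
  ((CFC.sqrt (Aᴴ * A)).trace).re

namespace Matrix

variable {n 𝕜 : Type*} [Fintype n] [RCLike 𝕜]

open scoped MatrixOrder

theorem PosSemidef.trace_mul_nonneg {A B : Matrix n n 𝕜} (hA : A.PosSemidef)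
    (hB : B.PosSemidef) : 0 ≤ (A * B).trace := by
  classical
  obtain ⟨C, rfl⟩ := CStarAlgebra.nonneg_iff_eq_star_mul_self.mp hB.nonneg
  rw [← Matrix.mul_assoc, trace_mul_comm, ← Matrix.mul_assoc]
  exact (hA.mul_mul_conjTranspose_same C).trace_nonneg

theorem trace_mul_le_trace_of_posSemidef_one_sub [DecidableEq n] {A B : Matrix n n 𝕜}
    (hA : (1 - A).PosSemidef) (hB : B.PosSemidef) : (A * B).trace ≤ B.trace := by
  simpa only [sub_mul, one_mul, trace_sub, sub_nonneg] using hA.trace_mul_nonneg hB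

theorem IsHermitian.neg_trace_abs_le_trace_mul [DecidableEq n] {A P : Matrix n n 𝕜}
    (hA : A.IsHermitian) (hP : P.PosSemidef) (hPI : (1 - P).PosSemidef) :
    -(CFC.abs A).trace ≤ (P * A).trace := by
  have habs : (CFC.abs A + A).PosSemidef := by
    rw [CFC.abs_add_self A hA.isSelfAdjoint, ← nonneg_iff_posSemidef]
    exact smul_nonneg zero_le_two (CFC.posPart_nonneg A)
  have hsum := hP.trace_mul_nonneg habs
  rw [mul_add, trace_add] at hsum
  have hle := trace_mul_le_trace_of_posSemidef_one_sub hPI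
    (nonneg_iff_posSemidef.mp (CFC.abs_nonneg A))
  calc -(CFC.abs A).trace ≤ -(P * CFC.abs A).trace := neg_le_neg hle
    _ ≤ (P * A).trace := neg_le_iff_add_nonneg'.mpr hsum

end Matrix

open scoped MatrixOrder Matrix.Norms.L2Operator in
theorem traceNorm_eq_re_trace_abs {d : Type*} [Fintype d] [DecidableEq d]
    (A : Matrix d d ℂ) : traceNorm A = (CFC.abs A).trace.re := rfl

theorem sandwiched_projector_lower_bound_general {d : Type*} [Fintype d] [DecidableEq d]
    (ρ P Pb : Matrix d d ℂ)
    (hρ : ρ.PosSemidef)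
    (hP : P.PosSemidef) (hPI : ((1 : Matrix d d ℂ) - P).PosSemidef)
    (hPb : Pb.PosSemidef) :
    ((P * ρ).trace).re - traceNorm (Pb * ρ * Pb - ρ) ≤ ((Pb * P * Pb * ρ).trace).re := by
  have hsandwich : (Pb * ρ * Pb).IsHermitian := by
    simpa only [hPb.isHermitian.eq] using Matrix.isHermitian_mul_mul_conjTranspose Pb hρ.isHermitian
  have hA : (Pb * ρ * Pb - ρ).IsHermitian := hsandwich.sub hρ.isHermitian
  have hcyc : (Pb * P * Pb * ρ).trace = (P * ρ).trace + (P * (Pb * ρ * Pb - ρ)).trace := by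
    rw [Matrix.mul_sub, Matrix.trace_sub, add_sub_cancel, Matrix.mul_assoc, Matrix.mul_assoc,
      Matrix.trace_mul_comm]
    simp only [Matrix.mul_assoc]
  have hbound := (Complex.le_def.mp (hA.neg_trace_abs_le_trace_mul hP hPI)).1
  rw [Complex.neg_re] at hbound
  rw [traceNorm_eq_re_trace_abs, hcyc, Complex.add_re]
  linarith

/-- Sandwiched-projector lower bound: for positive semidefinite `ρ` with `Tr[ρ] ≤ 1` and
`0 ≤ P, Pb ≤ I`, one has `Tr[Pb P Pb ρ] ≥ Tr[P ρ] − ‖Pb ρ Pb − ρ‖₁`. -/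
theorem sandwiched_projector_lower_bound {d : Type*} [Fintype d] [DecidableEq d]
    (ρ P Pb : Matrix d d ℂ)
    (hρ : ρ.PosSemidef) (hρtr : (ρ.trace).re ≤ 1)
    (hP : P.PosSemidef) (hPI : ((1 : Matrix d d ℂ) - P).PosSemidef)
    (hPb : Pb.PosSemidef) (hPbI : ((1 : Matrix d d ℂ) - Pb).PosSemidef) :
    ((P * ρ).trace).re - traceNorm (Pb * ρ * Pb - ρ) ≤ ((Pb * P * Pb * ρ).trace).re :=
  sandwiched_projector_lower_bound_general ρ P Pb hρ hP hPI hPb
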